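/- Let k ≥ 0 be an integer and let τ ∈ ℝ with τ ∉ Y_k (where Y_0 := ∅). Then there are infinitely many positive integers n such that 0 < (σ_n(τ) − τ)·n^{k+1} < c_k, and infinitely many positive integers n such that 0 < (τ − σ_n(τ))·n^{k+1} < c_k. -/

import Mathlib

/-- Greedy partial sums: `gSigma τ n = σ_n(τ)`. -/
noncomputable def gSigma (τ : ℝ) : ℕ → ℝ
  | 0 => 0
  | n + 1 => gSigma τ n + (if gSigma τ n ≤ τ then (1 : ℝ) else -1) / (n + 1)

/-- Greedy signs: for `n ≥ 1`, `gSign τ n = s_n(τ)`. -/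
noncomputable def gSign (τ : ℝ) (n : ℕ) : ℝ :=
  if gSigma τ (n - 1) ≤ τ then 1 else -1

/-- Thue–Morse signs: `tmSign n = ε_n`. -/
noncomputable def tmSign (n : ℕ) : ℝ := (-1 : ℝ) ^ (Nat.digits 2 n).sum

/-- `fPer k` is the `2^k`-periodic function with `fPer k n = ε_n` for `0 ≤ n < 2^k`. -/
noncomputable def fPer (k n : ℕ) : ℝ := tmSign (n % 2 ^ k)

/-- The exceptional set `X_k`. -/
def Xset (k : ℕ) : Set ℝ :=
  {τ | ∃ N m : ℕ, m < 2 ^ k ∧ ∀ n : ℕ, 1 ≤ n → N ≤ n → gSign τ n = fPer k (n + m)}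

/-- `Y_k = ⋃_{1 ≤ h ≤ k} X_h` (so `Y_0 = ∅`). -/
def Yset (k : ℕ) : Set ℝ := ⋃ h ∈ Finset.Icc 1 k, Xset h

/-- `cConst k = c_k = 2^{k(k-1)/2} k!`. -/
noncomputable def cConst (k : ℕ) : ℝ := 2 ^ (k * (k - 1) / 2) * Nat.factorial k

/-!
Write `d_n = σ_n(τ) - τ` and `a_m(p) = ∑_{j < 2^m} ε_j / (p + j)` (`tmBlock m p`). The partial sums
`σ_n(τ)` are pairwise distinct (a signed sum `∑_{a < i ≤ b} ±1/i` has a unique term of maximal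
2-adic valuation), so eventually both `d` and `-d` move by `1/(n+1)` towards `0` at every step.

Writing `a_m` as an `m`-fold difference of `p ↦ 1/p` gives `a_{m+1}(p) = a_m(p) - a_m(p + 2^m)`
and `c_m / (p + 2^{m+1})^{m+1} ≤ a_m(p) ≤ c_m / p^{m+1}`, so for large `p`,
`a_{m+1}(p) < a_m(p + 2^{m+1})`. The partial sums of a Thue–Morse block then show: if
`0 < d_t ≤ a_k(t+1)` with `t` large, the next `2^{k+1}` greedy signs are `-ε_j` and `d` lands on
`d_t - a_{k+1}(t+1)`. Iterating, either
`0 < d_t ≤ a_{k+1}(t+1)` for some later `t`, or the signs are eventually `2^{k+1}`-periodic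
Thue–Morse, i.e. `τ ∈ X_{k+1}`. By induction on `k`, `τ ∉ Y_k` gives infinitely many `t` with
`0 < d_t ≤ a_k(t+1) < c_k / t^{k+1}`, and the same for `-d`.
-/

open Finset Filter

theorem tmSign_zero : tmSign 0 = 1 := by simp [tmSign]

theorem tmSign_eq_one_or_eq_neg_one (n : ℕ) : tmSign n = 1 ∨ tmSign n = -1 :=
  neg_one_pow_eq_or ℝ _

theorem tmSign_two_mul (i : ℕ) : tmSign (2 * i) = tmSign i := by
  rcases Nat.eq_zero_or_pos i with rfl | hi
  · rfl
  · rw [tmSign, Nat.digits_def' one_lt_two (by omega), Nat.mul_mod_right,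
      Nat.mul_div_cancel_left _ two_pos, List.sum_cons, zero_add, tmSign]

theorem tmSign_two_mul_add_one (i : ℕ) : tmSign (2 * i + 1) = -tmSign i := by
  rw [tmSign, Nat.digits_def' one_lt_two (by omega), List.sum_cons, pow_add, tmSign]
  have h1 : (2 * i + 1) % 2 = 1 := by omega
  have h2 : (2 * i + 1) / 2 = i := by omega
  rw [h1, h2, pow_one, neg_one_mul]

theorem tmSign_add_two_pow {k j : ℕ} (hj : j < 2 ^ k) : tmSign (j + 2 ^ k) = -tmSign j := by
  induction k generalizing j with
  | zero =>
    obtain rfl : j = 0 := by omega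
    simpa [tmSign_zero] using tmSign_two_mul_add_one 0
  | succ k ih =>
    obtain ⟨i, rfl | rfl⟩ := Nat.even_or_odd' j
    · rw [show 2 * i + 2 ^ (k + 1) = 2 * (i + 2 ^ k) by ring, tmSign_two_mul, tmSign_two_mul,
        ih (by rw [pow_succ] at hj; omega)]
    · rw [show 2 * i + 1 + 2 ^ (k + 1) = 2 * (i + 2 ^ k) + 1 by ring, tmSign_two_mul_add_one,
        tmSign_two_mul_add_one, ih (by rw [pow_succ] at hj; omega)]

theorem fPer_congr {k x y : ℕ} (h : x ≡ y [MOD 2 ^ k]) : fPer k x = fPer k y :=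
  congrArg tmSign h

theorem fPer_add_two_pow (k x : ℕ) : fPer (k + 1) (x + 2 ^ k) = -fPer (k + 1) x := by
  have hpow : 2 ^ (k + 1) = 2 ^ k + 2 ^ k := by rw [pow_succ]; ring
  have hr : x % 2 ^ (k + 1) < 2 ^ (k + 1) := Nat.mod_lt _ (by positivity)
  rw [fPer, fPer, Nat.add_mod, Nat.mod_eq_of_lt (a := 2 ^ k) (by omega)]
  rcases lt_or_ge (x % 2 ^ (k + 1)) (2 ^ k) with h | h
  · rw [Nat.mod_eq_of_lt (by omega), tmSign_add_two_pow h]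
  · obtain ⟨r, hr', hrk⟩ : ∃ r, x % 2 ^ (k + 1) = r + 2 ^ k ∧ r < 2 ^ k :=
      ⟨x % 2 ^ (k + 1) - 2 ^ k, by omega, by omega⟩
    rw [hr', tmSign_add_two_pow hrk, show r + 2 ^ k + 2 ^ k = r + 2 ^ (k + 1) by omega,
      Nat.add_mod_right, Nat.mod_eq_of_lt (by omega), neg_neg]

theorem gSign_succ (τ : ℝ) (n : ℕ) :
    gSign τ (n + 1) = ((n : ℝ) + 1) * (gSigma τ (n + 1) - gSigma τ n) := by
  rw [gSigma, add_sub_cancel_left, mul_div_cancel₀ _ (by positivity), gSign, Nat.add_sub_cancel]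

theorem gSigma_sub_gSigma (τ : ℝ) {a b : ℕ} (hab : a ≤ b) :
    gSigma τ b - gSigma τ a =
      ((∑ i ∈ Ioc a b, (if gSigma τ (i - 1) ≤ τ then 1 else -1 : ℚ) / i : ℚ) : ℝ) := by
  induction b, hab using Nat.le_induction with
  | base => simp
  | succ n hn ih =>
    rw [sum_Ioc_succ_top hn, Rat.cast_add, ← ih, gSigma, Nat.add_sub_cancel]
    split_ifs <;> push_cast <;> ring

theorem exists_unique_max_padicValNat_two {a b : ℕ} (hab : a < b) :
    ∃ i₀ ∈ Ioc a b, ∀ i ∈ Ioc a b, i ≠ i₀ → padicValNat 2 i < padicValNat 2 i₀ := by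
  obtain ⟨i₀, hi₀, hmax⟩ := exists_max_image (Ioc a b) (padicValNat 2) ⟨b, by simp [hab]⟩
  refine ⟨i₀, hi₀, fun i hi hne => (hmax i hi).lt_of_ne fun heq => ?_⟩
  -- Between two multiples of `2 ^ v` with odd cofactors lies a multiple of `2 ^ (v + 1)`.
  suffices key : ∀ x ∈ Ioc a b, ∀ y ∈ Ioc a b, x < y → padicValNat 2 x = padicValNat 2 i₀ →
      padicValNat 2 y = padicValNat 2 i₀ → False by
    rcases lt_or_gt_of_ne hne with h | h
    · exact key i hi i₀ hi₀ h heq rfl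
    · exact key i₀ hi₀ i hi h rfl heq
  intro x hx y hy hxy hvx hvy
  simp only [mem_Ioc] at hx hy
  set v := padicValNat 2 i₀
  obtain ⟨c, rfl⟩ : 2 ^ v ∣ x := hvx ▸ pow_padicValNat_dvd
  obtain ⟨e, rfl⟩ : 2 ^ v ∣ y := hvy ▸ pow_padicValNat_dvd
  have hc : ¬ 2 ∣ c := fun ⟨c', hc'⟩ =>
    pow_succ_padicValNat_not_dvd (p := 2) (n := 2 ^ v * c) (by omega)
      ⟨c', by rw [hvx, hc', pow_succ]; ring⟩
  have hce : c + 1 ≤ e := by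
    by_contra! h
    exact absurd hxy (not_lt.2 (Nat.mul_le_mul_left _ (by omega)))
  obtain ⟨d, hd⟩ : 2 ∣ c + 1 := by omega
  have hz : 2 ^ v * (c + 1) ∈ Ioc a b := mem_Ioc.2
    ⟨by nlinarith [Nat.one_le_two_pow (n := v)], hy.2.trans' (Nat.mul_le_mul_left _ hce)⟩
  have hdiv : 2 ^ (v + 1) ∣ 2 ^ v * (c + 1) := ⟨d, by rw [hd, pow_succ]; ring⟩
  have := (padicValNat_dvd_iff_le (by positivity)).1 hdiv
  have := hmax _ hz
  omega

theorem padicNorm_two_sign_div {g : ℚ} (hg : g = 1 ∨ g = -1) {i : ℕ} (hi : i ≠ 0) :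
    padicNorm 2 (g / i) = 2 ^ (padicValNat 2 i : ℤ) := by
  have hg1 : padicNorm 2 g = 1 := by rcases hg with rfl | rfl <;> simp
  rw [padicNorm.div, hg1, padicNorm.eq_zpow_of_nonzero (by exact_mod_cast hi),
    padicValRat.of_nat, zpow_neg, one_div, inv_inv]
  norm_cast

theorem sum_Ioc_sign_div_ne_zero {a b : ℕ} (hab : a < b) {g : ℕ → ℚ}
    (hg : ∀ i, g i = 1 ∨ g i = -1) : ∑ i ∈ Ioc a b, g i / i ≠ 0 := by
  obtain ⟨i₀, hi₀, hmax⟩ := exists_unique_max_padicValNat_two hab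
  have hpos : ∀ i ∈ Ioc a b, i ≠ 0 := fun i hi => by simp at hi; omega
  have hrest : padicNorm 2 (∑ i ∈ (Ioc a b).erase i₀, g i / i) < padicNorm 2 (g i₀ / i₀) := by
    refine padicNorm.sum_lt' (fun i hi => ?_)
      (by rw [padicNorm_two_sign_div (hg i₀) (hpos i₀ hi₀)]; positivity)
    obtain ⟨hne, hi⟩ := mem_erase.1 hi
    rw [padicNorm_two_sign_div (hg i) (hpos i hi), padicNorm_two_sign_div (hg i₀) (hpos i₀ hi₀)]
    exact zpow_lt_zpow_right₀ one_lt_two (by exact_mod_cast hmax i hi hne)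
  intro hzero
  rw [← add_sum_erase _ _ hi₀, add_eq_zero_iff_neg_eq'] at hzero
  rw [← hzero, padicNorm.neg] at hrest
  exact lt_irrefl _ hrest

theorem gSigma_injective (τ : ℝ) : Function.Injective (gSigma τ) := by
  refine Function.Injective.of_lt_imp_ne fun a b hab heq => ?_
  have hsum := gSigma_sub_gSigma τ hab.le
  rw [heq, sub_self, eq_comm, Rat.cast_eq_zero] at hsum
  exact sum_Ioc_sign_div_ne_zero hab (fun i => by split_ifs <;> simp) hsum

theorem exists_forall_gSigma_ne (τ : ℝ) : ∃ N, ∀ n, N ≤ n → gSigma τ n ≠ τ := by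
  by_cases h : ∃ n₀, gSigma τ n₀ = τ
  · obtain ⟨n₀, hn₀⟩ := h
    exact ⟨n₀ + 1, fun n hn heq => by
      have := gSigma_injective τ (heq.trans hn₀.symm); omega⟩
  · exact ⟨0, fun n _ heq => h ⟨n, heq⟩⟩

theorem mem_Xset_of_gSign_eq {τ : ℝ} {k t₀ : ℕ} (c : ℕ)
    (h : ∀ n, t₀ ≤ n → gSign τ (n + 1) = fPer k (n - t₀ + c)) : τ ∈ Xset k := by
  refine ⟨t₀ + 1, (c + (2 ^ k - 1) * (t₀ + 1)) % 2 ^ k, Nat.mod_lt _ (by positivity),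
    fun n _ hn => ?_⟩
  obtain ⟨n, rfl⟩ : ∃ n', n = n' + 1 := ⟨n - 1, by omega⟩
  rw [h n (by omega)]
  apply fPer_congr
  refine Nat.ModEq.add_right_cancel' (t₀ + 1) ?_
  have hsplit : (2 ^ k - 1) * (t₀ + 1) + (t₀ + 1) = 2 ^ k * (t₀ + 1) := by
    rw [← Nat.succ_mul, Nat.succ_eq_add_one, Nat.sub_add_cancel Nat.one_le_two_pow]
  calc n - t₀ + c + (t₀ + 1) = n + 1 + c := by omega
    _ ≡ n + 1 + c + 2 ^ k * (t₀ + 1) [MOD 2 ^ k] := (Nat.add_mul_mod_self_left _ _ _).symm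
    _ = n + 1 + (c + (2 ^ k - 1) * (t₀ + 1)) + (t₀ + 1) := by rw [← hsplit]; ring
    _ ≡ n + 1 + (c + (2 ^ k - 1) * (t₀ + 1)) % 2 ^ k + (t₀ + 1) [MOD 2 ^ k] :=
        ((Nat.mod_modEq _ _).symm.add_left _).add_right _

namespace ThueMorseGreedy

open scoped Nat

theorem ascFactorial_pos_of_pos {q : ℕ} (hq : 0 < q) (k : ℕ) : 0 < q.ascFactorial k := by
  obtain ⟨q, rfl⟩ := Nat.exists_eq_add_one_of_ne_zero hq.ne'
  exact Nat.ascFactorial_pos q k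

/-- `beta r = (-Δ)^r (q ↦ 1 / q)` for the forward difference `Δ`
(`beta_zero`, `beta_sub_beta_succ`). -/
noncomputable def beta (r q : ℕ) : ℝ := r ! / (q.ascFactorial (r + 1) : ℝ)

theorem beta_pos (r : ℕ) {q : ℕ} (hq : 0 < q) : 0 < beta r q := by
  have := ascFactorial_pos_of_pos hq (r + 1)
  unfold beta
  positivity

theorem beta_zero (q : ℕ) : beta 0 q = 1 / q := by
  simp [beta, Nat.ascFactorial_succ]

theorem beta_sub_beta_succ (r : ℕ) {q : ℕ} (hq : 0 < q) :
    beta r q - beta r (q + 1) = beta (r + 1) q := by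
  have hA₁ := ascFactorial_pos_of_pos hq (r + 1)
  have hA₂ := ascFactorial_pos_of_pos (Nat.succ_pos q) (r + 1)
  have e : (q : ℝ) * (q + 1).ascFactorial (r + 1) = (q + r + 1) * q.ascFactorial (r + 1) := by
    exact_mod_cast Nat.succ_ascFactorial q (r + 1)
  unfold beta
  rw [div_sub_div _ _ (by positivity) (by positivity), div_eq_div_iff (by positivity)
    (by rw [Nat.ascFactorial_succ]; positivity), Nat.ascFactorial_succ (n := q) (k := r + 1),
    Nat.factorial_succ]
  push_cast
  linear_combination ((r ! : ℝ) * q.ascFactorial (r + 1)) * e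

theorem beta_antitone (r : ℕ) {q q' : ℕ} (hq : 0 < q) (h : q ≤ q') : beta r q' ≤ beta r q := by
  have := ascFactorial_pos_of_pos hq (r + 1)
  unfold beta
  gcongr

theorem beta_le (r : ℕ) {q : ℕ} (hq : 0 < q) : beta r q ≤ r ! / (q : ℝ) ^ (r + 1) := by
  unfold beta
  gcongr
  exact_mod_cast Nat.pow_succ_le_ascFactorial q (r + 1)

theorem le_beta (r : ℕ) {q : ℕ} (hq : 0 < q) : r ! / ((q : ℝ) + r + 1) ^ (r + 1) ≤ beta r q := by
  have := ascFactorial_pos_of_pos hq (r + 1)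
  unfold beta
  gcongr
  have := (Nat.ascFactorial_le (r + 1) q.le_succ).trans (Nat.ascFactorial_le_pow_add q (r + 1))
  rw [← add_assoc] at this
  exact_mod_cast this

noncomputable def tmDiff (m r q : ℕ) : ℝ := ∑ j ∈ range (2 ^ m), tmSign j * beta r (q + j)

theorem tmDiff_zero (r q : ℕ) : tmDiff 0 r q = beta r q := by
  simp [tmDiff, tmSign_zero]

theorem tmDiff_succ (m r q : ℕ) : tmDiff (m + 1) r q = tmDiff m r q - tmDiff m r (q + 2 ^ m) := by
  rw [tmDiff, pow_succ, mul_two, sum_range_add, tmDiff, tmDiff, sub_eq_add_neg, ← sum_neg_distrib]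
  congr 1
  refine sum_congr rfl fun j hj => ?_
  rw [add_comm (2 ^ m) j, tmSign_add_two_pow (mem_range.1 hj), add_right_comm, add_assoc]
  ring

theorem tmDiff_sub_succ (m r : ℕ) {q : ℕ} (hq : 0 < q) :
    tmDiff m r q - tmDiff m r (q + 1) = tmDiff m (r + 1) q := by
  simp only [tmDiff, ← sum_sub_distrib, ← mul_sub]
  refine sum_congr rfl fun j _ => ?_
  rw [add_right_comm, beta_sub_beta_succ r (by omega)]

theorem tmDiff_succ_eq_sum (m r : ℕ) {q : ℕ} (hq : 0 < q) :
    tmDiff (m + 1) r q = ∑ u ∈ range (2 ^ m), tmDiff m (r + 1) (q + u) := by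
  have telescope := sum_range_sub' (fun u => tmDiff m r (q + u)) (2 ^ m)
  rw [add_zero] at telescope
  rw [tmDiff_succ, ← telescope]
  exact sum_congr rfl fun u _ => tmDiff_sub_succ m r (by omega)

theorem two_pow_choose_two_succ (m : ℕ) : (2 : ℝ) ^ (m + 1).choose 2 = 2 ^ m * 2 ^ m.choose 2 := by
  rw [Nat.choose_succ_succ, Nat.choose_one_right, pow_add]

theorem tmDiff_le (m : ℕ) :
    ∀ r {q : ℕ}, 0 < q → tmDiff m r q ≤ 2 ^ m.choose 2 * beta (m + r) q := by
  induction m with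
  | zero => intro r q _; simp [tmDiff_zero]
  | succ m ih =>
    intro r q hq
    calc tmDiff (m + 1) r q = ∑ u ∈ range (2 ^ m), tmDiff m (r + 1) (q + u) :=
          tmDiff_succ_eq_sum m r hq
      _ ≤ ∑ _u ∈ range (2 ^ m), 2 ^ m.choose 2 * beta (m + (r + 1)) q :=
          sum_le_sum fun u _ => (ih (r + 1) (by omega)).trans
            (by gcongr; exact beta_antitone _ hq (by omega))
      _ = 2 ^ (m + 1).choose 2 * beta (m + 1 + r) q := by
          rw [sum_const, card_range, nsmul_eq_mul, two_pow_choose_two_succ, add_right_comm,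
            add_assoc]
          push_cast
          ring

theorem le_tmDiff (m : ℕ) : ∀ r {q : ℕ}, 0 < q →
    2 ^ m.choose 2 * beta (m + r) (q + 2 ^ m) ≤ tmDiff m r q := by
  induction m with
  | zero => intro r q hq; simpa [tmDiff_zero] using beta_antitone r hq (by omega)
  | succ m ih =>
    intro r q hq
    calc 2 ^ (m + 1).choose 2 * beta (m + 1 + r) (q + 2 ^ (m + 1))
        = ∑ _u ∈ range (2 ^ m), 2 ^ m.choose 2 * beta (m + (r + 1)) (q + 2 ^ (m + 1)) := by
          rw [sum_const, card_range, nsmul_eq_mul, two_pow_choose_two_succ, add_right_comm m 1 r,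
            add_assoc]
          push_cast
          ring
      _ ≤ ∑ u ∈ range (2 ^ m), tmDiff m (r + 1) (q + u) := by
          refine sum_le_sum fun u hu => le_trans ?_ (ih (r + 1) (by omega))
          have : u < 2 ^ m := mem_range.1 hu
          gcongr
          exact beta_antitone _ (by omega) (by rw [pow_succ]; omega)
      _ = tmDiff (m + 1) r q := (tmDiff_succ_eq_sum m r hq).symm

noncomputable def tmPartialSum (p j : ℕ) : ℝ := ∑ i ∈ range j, tmSign i / ((p : ℝ) + i)

noncomputable def tmBlock (m p : ℕ) : ℝ := tmPartialSum p (2 ^ m)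

theorem tmPartialSum_succ (p j : ℕ) :
    tmPartialSum p (j + 1) = tmPartialSum p j + tmSign j / ((p : ℝ) + j) :=
  sum_range_succ _ j

theorem tmPartialSum_two_pow_add (k : ℕ) {r : ℕ} (hr : r ≤ 2 ^ k) (p : ℕ) :
    tmPartialSum p (2 ^ k + r) = tmBlock k p - tmPartialSum (p + 2 ^ k) r := by
  rw [tmPartialSum, sum_range_add, tmBlock, tmPartialSum, tmPartialSum, sub_eq_add_neg,
    ← sum_neg_distrib]
  congr 1
  refine sum_congr rfl fun i hi => ?_
  rw [add_comm (2 ^ k) i, tmSign_add_two_pow ((mem_range.1 hi).trans_le hr)]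
  push_cast
  ring

theorem tmBlock_succ (m p : ℕ) : tmBlock (m + 1) p = tmBlock m p - tmBlock m (p + 2 ^ m) := by
  rw [tmBlock, pow_succ, mul_two, tmPartialSum_two_pow_add m le_rfl]
  rfl

theorem tmBlock_eq_tmDiff (m p : ℕ) : tmBlock m p = tmDiff m 0 p := by
  unfold tmBlock tmPartialSum tmDiff
  refine sum_congr rfl fun j _ => ?_
  rw [beta_zero]
  push_cast
  ring

theorem cConst_eq (m : ℕ) : cConst m = 2 ^ m.choose 2 * m ! := by
  rw [cConst, Nat.choose_two_right]

theorem cConst_succ (m : ℕ) : cConst (m + 1) = 2 ^ m * (m + 1) * cConst m := by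
  rw [cConst_eq, cConst_eq, two_pow_choose_two_succ, Nat.factorial_succ]
  push_cast
  ring

theorem tmBlock_le (m : ℕ) {p : ℕ} (hp : 0 < p) : tmBlock m p ≤ cConst m / (p : ℝ) ^ (m + 1) := by
  rw [tmBlock_eq_tmDiff, cConst_eq, mul_div_assoc]
  refine (tmDiff_le m 0 hp).trans ?_
  gcongr
  exact beta_le m hp

theorem cConst_div_le_tmBlock (m : ℕ) {p : ℕ} (hp : 0 < p) :
    cConst m / ((p : ℝ) + 2 ^ (m + 1)) ^ (m + 1) ≤ tmBlock m p := by
  rw [tmBlock_eq_tmDiff, cConst_eq, mul_div_assoc]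
  refine le_trans ?_ (le_tmDiff m 0 hp)
  gcongr
  refine le_trans ?_ (le_beta m (by positivity))
  have : (m : ℝ) + 1 ≤ 2 ^ m := by exact_mod_cast Nat.lt_two_pow_self
  apply div_le_div_of_nonneg_left (by positivity) (by positivity)
  apply pow_le_pow_left₀ (by positivity)
  push_cast
  rw [pow_succ]
  linarith

theorem cConst_pos (m : ℕ) : 0 < cConst m := by
  rw [cConst]
  positivity

theorem tmBlock_pos (m : ℕ) {p : ℕ} (hp : 0 < p) : 0 < tmBlock m p :=
  lt_of_lt_of_le (by have := cConst_pos m; positivity) (cConst_div_le_tmBlock m hp)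

theorem tmBlock_succ_le (m : ℕ) {p : ℕ} (hp : 0 < p) : tmBlock (m + 1) p ≤ tmBlock m p := by
  rw [tmBlock_succ]
  linarith [tmBlock_pos m (p := p + 2 ^ m) (by positivity)]

/-- A point from which `tmBlock_succ_lt` holds. -/
def threshold (m : ℕ) : ℕ := (m + 1) * 4 ^ (m + 1)

theorem threshold_mono : Monotone threshold := fun _ _ h =>
  Nat.mul_le_mul (by omega) (Nat.pow_le_pow_right (by norm_num) (by omega))

theorem threshold_pos (m : ℕ) : 0 < threshold m := by
  unfold threshold
  positivity

theorem tmBlock_succ_lt (m : ℕ) {p : ℕ} (hp : threshold m ≤ p) :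
    tmBlock (m + 1) p < tmBlock m (p + 2 ^ (m + 1)) := by
  have hp0 : 0 < p := (threshold_pos m).trans_le hp
  have hc := cConst_pos m
  have hpR : ((m : ℝ) + 1) * 4 ^ (m + 1) ≤ p := by exact_mod_cast hp
  have h4 : (4 : ℝ) ^ (m + 1) = 2 * (2 ^ m * 2 ^ (m + 1)) := by
    rw [show (4 : ℝ) = 2 * 2 by norm_num, mul_pow, pow_succ 2 m]; ring
  have hlarge : 2 ^ m * ((m : ℝ) + 1) * 2 ^ (m + 1) < p := by
    refine lt_of_lt_of_le ?_ hpR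
    have : 0 < 2 ^ m * ((m : ℝ) + 1) * 2 ^ (m + 1) := by positivity
    rw [h4]
    linarith
  have hsmall : (2 : ℝ) ^ (m + 2) ≤ p := by
    have : 2 ^ (m + 2) ≤ threshold m :=
      (Nat.pow_le_pow_right two_pos (by omega : m + 2 ≤ 2 * (m + 1))).trans
        (by rw [pow_mul]; exact Nat.le_mul_of_pos_left _ (by omega))
    exact_mod_cast this.trans hp
  calc tmBlock (m + 1) p ≤ cConst (m + 1) / (p : ℝ) ^ (m + 1 + 1) := tmBlock_le _ hp0
    _ = cConst m * (2 ^ m * (m + 1)) / (p * p ^ (m + 1)) := by rw [cConst_succ, pow_succ]; ring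
    _ < cConst m / (2 ^ (m + 1) * p ^ (m + 1)) := by
        rw [div_lt_div_iff₀ (by positivity) (by positivity)]
        calc cConst m * (2 ^ m * (m + 1)) * (2 ^ (m + 1) * p ^ (m + 1))
            = cConst m * p ^ (m + 1) * (2 ^ m * (m + 1) * 2 ^ (m + 1)) := by ring
          _ < cConst m * p ^ (m + 1) * p := by gcongr
          _ = cConst m * (p * p ^ (m + 1)) := by ring
    _ = cConst m / (2 * (p : ℝ)) ^ (m + 1) := by rw [mul_pow]
    _ ≤ cConst m / (((p + 2 ^ (m + 1) : ℕ) : ℝ) + 2 ^ (m + 1)) ^ (m + 1) := by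
        gcongr
        push_cast
        rw [pow_succ _ (m + 1)] at hsmall
        linarith
    _ ≤ tmBlock m (p + 2 ^ (m + 1)) := cConst_div_le_tmBlock m (by positivity)

theorem tmBlock_zero (p : ℕ) : tmBlock 0 p = 1 / p := by
  simp [tmBlock, tmPartialSum, tmSign_zero]

theorem pos_of_tmSign_eq_neg_one {j k : ℕ} (h : tmSign j = -1) (hj : j < 2 ^ k) : 0 < k := by
  refine Nat.pos_of_ne_zero fun hk => ?_
  obtain rfl : j = 0 := by simpa [hk] using hj
  norm_num [tmSign_zero] at h

/-- This forces the greedy signs to follow the Thue–Morse pattern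
(`GreedyFrom.eq_sub_tmPartialSum`). -/
theorem tmPartialSum_bounds {k p : ℕ} (hp : threshold k ≤ p) {j : ℕ} (hj : j < 2 ^ k) :
    (tmSign j = 1 → tmPartialSum p j ≤ 0) ∧
      (tmSign j = -1 → tmBlock (k - 1) p ≤ tmPartialSum p j) := by
  induction k generalizing p j with
  | zero =>
    obtain rfl : j = 0 := by simpa using hj
    norm_num [tmPartialSum, tmSign_zero]
  | succ k ih =>
    have hpk : threshold k ≤ p := (threshold_mono k.le_succ).trans hp
    have hp0 : 0 < p := (threshold_pos k).trans_le hpk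
    rcases lt_or_ge j (2 ^ k) with hjk | hjk
    · refine ⟨(ih hpk hjk).1, fun hs => ?_⟩
      obtain ⟨k, rfl⟩ := Nat.exists_eq_add_one_of_ne_zero (pos_of_tmSign_eq_neg_one hs hjk).ne'
      exact (tmBlock_succ_le k hp0).trans ((ih hpk hjk).2 hs)
    · obtain ⟨r, rfl⟩ := Nat.exists_eq_add_of_le hjk
      have hr : r < 2 ^ k := by rw [pow_succ] at hj; omega
      have hsign : tmSign (2 ^ k + r) = -tmSign r := by rw [add_comm]; exact tmSign_add_two_pow hr
      have ih' := ih (p := p + 2 ^ k) (by omega) hr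
      rw [tmPartialSum_two_pow_add k hr.le, hsign, Nat.add_sub_cancel]
      constructor
      · intro hs
        have hr' : tmSign r = -1 := by linarith
        obtain ⟨k, rfl⟩ := Nat.exists_eq_add_one_of_ne_zero (pos_of_tmSign_eq_neg_one hr' hr).ne'
        have hlt := tmBlock_succ_lt k ((threshold_mono k.le_succ).trans hpk)
        have hle := ih'.2 hr'
        rw [Nat.add_sub_cancel] at hle
        linarith
      · intro hs
        linarith [ih'.1 (by linarith)]

/-- Both `σ_n(τ) - τ` and `τ - σ_n(τ)` are of this form once `σ_n(τ) ≠ τ`, so one argument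
serves both signs. -/
def GreedyFrom (N : ℕ) (d : ℕ → ℝ) : Prop :=
  ∀ n, N ≤ n → d n ≠ 0 ∧ d (n + 1) = d n - Real.sign (d n) / (n + 1)

variable {N : ℕ} {d : ℕ → ℝ}

theorem GreedyFrom.neg (hd : GreedyFrom N d) : GreedyFrom N (fun n => -d n) := fun n hn =>
  ⟨neg_ne_zero.2 (hd n hn).1, by dsimp only; rw [(hd n hn).2, Real.sign_neg]; ring⟩

theorem GreedyFrom.eq_sub_tmPartialSum (hd : GreedyFrom N d) {m t : ℕ} (hN : N ≤ t)
    (hthr : threshold m ≤ t) (hpos : 0 < d t) (hle : 0 < m → d t ≤ tmBlock (m - 1) (t + 1)) :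
    ∀ j ≤ 2 ^ m, d (t + j) = d t - tmPartialSum (t + 1) j := by
  intro j hj
  induction j with
  | zero => simp [tmPartialSum]
  | succ j ih =>
    have hjm : j < 2 ^ m := by omega
    obtain ⟨hne, hstep⟩ := hd (t + j) (by omega)
    have hQ := tmPartialSum_bounds (p := t + 1) (by omega) hjm
    have hsign : Real.sign (d (t + j)) = tmSign j := by
      rcases tmSign_eq_one_or_eq_neg_one j with hs | hs
      · rw [hs, Real.sign_of_pos (by linarith [hQ.1 hs, ih hjm.le])]
      · have hm : 0 < m := pos_of_tmSign_eq_neg_one hs hjm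
        have hneg : d (t + j) < 0 :=
          lt_of_le_of_ne (by linarith [hQ.2 hs, hle hm, ih hjm.le]) hne
        rw [hs, Real.sign_of_neg hneg]
    rw [← add_assoc, hstep, hsign, ih hjm.le, tmPartialSum_succ]
    push_cast
    ring

theorem GreedyFrom.eq_sub_tmBlock (hd : GreedyFrom N d) {m t : ℕ} (hN : N ≤ t)
    (hthr : threshold m ≤ t) (hpos : 0 < d t) (hle : 0 < m → d t ≤ tmBlock (m - 1) (t + 1)) :
    d (t + 2 ^ m) = d t - tmBlock m (t + 1) :=
  hd.eq_sub_tmPartialSum hN hthr hpos hle _ le_rfl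

theorem GreedyFrom.le_tmBlock_add_two_pow (hd : GreedyFrom N d) {k t : ℕ} (hN : N ≤ t)
    (hthr : threshold (k + 1) ≤ t)
    (hno : ∀ s, t ≤ s → 0 < d s → tmBlock (k + 1) (s + 1) < d s)
    (hpos : 0 < d t) (hle : d t ≤ tmBlock k (t + 1)) :
    0 < d (t + 2 ^ (k + 1)) ∧ d (t + 2 ^ (k + 1)) ≤ tmBlock k (t + 2 ^ (k + 1) + 1) := by
  set L := 2 ^ k
  have h2L : 2 ^ (k + 1) = L + L := by rw [pow_succ]; omega
  have h4L : 2 ^ (k + 2) = 4 * L := by rw [pow_add]; omega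
  have hthr' : threshold k ≤ t := (threshold_mono k.le_succ).trans hthr
  have e₁ := hd.eq_sub_tmBlock hN hthr hpos fun _ => hle
  have hgt := hno t le_rfl hpos
  refine ⟨by linarith, ?_⟩
  -- Otherwise a level-`k` and then a level-`(k + 1)` block from `t₂` end in
  -- `(0, a_{k+2}(t + 1 + 2^k)]`, below `a_{k+1}`, contradicting `hno`.
  by_contra! hbig
  set t₂ := t + 2 ^ (k + 1) with ht₂
  have hrec₁ := tmBlock_succ k (t + 1)
  have hpos₂ : 0 < d t₂ := by linarith
  have e₂ := hd.eq_sub_tmBlock (m := k) (t := t₂) (by omega) (by omega) hpos₂ fun hk => by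
    obtain ⟨k', rfl⟩ := Nat.exists_eq_add_one_of_ne_zero hk.ne'
    have := tmBlock_succ_lt k' (p := t + 1 + L)
      (((threshold_mono (by omega : k' ≤ k' + 1 + 1)).trans hthr).trans (by omega))
    rw [show t + 1 + L + 2 ^ (k' + 1) = t₂ + 1 by omega] at this
    simp only [Nat.add_sub_cancel]
    linarith
  set t₃ := t₂ + L with ht₃
  have hrec₂ := tmBlock_succ k (t + 1 + L)
  rw [show t + 1 + L + 2 ^ k = t₂ + 1 by omega] at hrec₂
  have hpos₃ : 0 < d t₃ := by linarith
  have hlt₃ := tmBlock_succ_lt k (p := t + 1 + L) (by omega)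
  rw [show t + 1 + L + 2 ^ (k + 1) = t₃ + 1 by omega] at hlt₃
  have e₃ := hd.eq_sub_tmBlock (m := k + 1) (t := t₃) (by omega) (by omega) hpos₃ fun _ => by
    simp only [Nat.add_sub_cancel]
    linarith
  have hgt₃ := hno t₃ (by omega) hpos₃
  have hrec₃ := tmBlock_succ (k + 1) (t + 1 + L)
  rw [show t + 1 + L + 2 ^ (k + 1) = t₃ + 1 by omega] at hrec₃
  have hlt₅ := tmBlock_succ_lt (k + 1) (p := t + 1 + L) (by omega)
  rw [show t + 1 + L + 2 ^ (k + 1 + 1) = t₃ + 2 ^ (k + 1) + 1 by omega] at hlt₅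
  have := hno (t₃ + 2 ^ (k + 1)) (by omega) (by linarith)
  linarith

def StepsFollowTM (k : ℕ) (d : ℕ → ℝ) : Prop :=
  ∃ t₀ : ℕ, ∀ n : ℕ, t₀ ≤ n → ((n : ℝ) + 1) * (d (n + 1) - d n) = -fPer k (n - t₀)

theorem GreedyFrom.exists_le_tmBlock_succ (hd : GreedyFrom N d) {k t₀ : ℕ} (hN : N ≤ t₀)
    (hthr : threshold (k + 1) ≤ t₀) (hpos : 0 < d t₀) (hle : d t₀ ≤ tmBlock k (t₀ + 1))
    (hpat : ¬ StepsFollowTM (k + 1) d) :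
    ∃ t, t₀ ≤ t ∧ 0 < d t ∧ d t ≤ tmBlock (k + 1) (t + 1) := by
  by_contra! hno
  set P := 2 ^ (k + 1)
  have hinv : ∀ r, 0 < d (t₀ + P * r) ∧ d (t₀ + P * r) ≤ tmBlock k (t₀ + P * r + 1) := by
    intro r
    induction r with
    | zero => exact ⟨hpos, hle⟩
    | succ r ih =>
      rw [mul_add_one, ← add_assoc]
      exact hd.le_tmBlock_add_two_pow (by omega) (by omega) (fun s hs => hno s (by omega))
        ih.1 ih.2
  refine hpat ⟨t₀, fun n hn => ?_⟩
  obtain ⟨r, j, hj, rfl⟩ : ∃ r j, j < P ∧ n = t₀ + P * r + j :=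
    ⟨(n - t₀) / P, (n - t₀) % P, Nat.mod_lt _ (by positivity),
      by have := Nat.div_add_mod (n - t₀) P; omega⟩
  have hblock := hd.eq_sub_tmPartialSum (m := k + 1) (t := t₀ + P * r) (by omega) (by omega)
    (hinv r).1 fun _ => (hinv r).2
  rw [show t₀ + P * r + j + 1 = t₀ + P * r + (j + 1) by ring, hblock _ hj, hblock _ hj.le,
    tmPartialSum_succ, fPer, show t₀ + P * r + j - t₀ = j + P * r by omega,
    Nat.add_mul_mod_self_left, Nat.mod_eq_of_lt hj]
  push_cast
  field_simp
  ring

theorem GreedyFrom.frequently_nonpos (hd : GreedyFrom N d) : ∃ᶠ t in atTop, d t ≤ 0 := by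
  intro hev
  obtain ⟨M, hM⟩ := eventually_atTop.1 (hev.and (eventually_ge_atTop N))
  -- While `d > 0` it decreases along the harmonic series, which diverges.
  set H : ℕ → ℝ := fun n => ∑ i ∈ range n, 1 / ((i : ℝ) + 1)
  have hconst : ∀ n, M ≤ n → d n + H n = d M + H M := by
    intro n hn
    induction n, hn using Nat.le_induction with
    | base => rfl
    | succ n hn ih =>
      have hdn := hM n hn
      rw [(hd n hdn.2).2, Real.sign_of_pos (not_le.1 hdn.1), ← ih]
      simp only [H, sum_range_succ]
      ring
  obtain ⟨n₀, hn₀⟩ := (Real.tendsto_sum_range_one_div_nat_succ_atTop.eventually_gt_atTop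
    (d M + H M)).exists_forall_of_atTop
  have := hconst (max M n₀) (le_max_left _ _)
  have := hn₀ (max M n₀) (le_max_right _ _)
  have := (hM (max M n₀) (le_max_left _ _)).1
  linarith

theorem GreedyFrom.frequently_pos (hd : GreedyFrom N d) : ∃ᶠ t in atTop, 0 < d t :=
  (hd.neg.frequently_nonpos.and_eventually (eventually_ge_atTop N)).mono fun t h =>
    lt_of_le_of_ne (neg_nonpos.1 h.1) (hd t h.2).1.symm

theorem GreedyFrom.frequently_pos_le_tmBlock_zero (hd : GreedyFrom N d) :
    ∃ᶠ t in atTop, 0 < d t ∧ d t ≤ tmBlock 0 (t + 1) := by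
  -- Just before `d` turns nonpositive it lies in `(0, 1 / (t + 1)]`.
  refine frequently_atTop.2 fun M => ?_
  obtain ⟨t₁, ht₁, hpos₁⟩ := hd.frequently_pos.forall_exists_of_atTop (max M N)
  obtain ⟨t, ht, hpos, hnext⟩ : ∃ t, t₁ ≤ t ∧ 0 < d t ∧ d (t + 1) ≤ 0 := by
    by_contra! hstay
    have hall : ∀ n, t₁ ≤ n → 0 < d n := fun n hn => by
      induction n, hn using Nat.le_induction with
      | base => exact hpos₁
      | succ n hn ih => exact hstay n hn ih
    obtain ⟨n, hn, hle⟩ := hd.frequently_nonpos.forall_exists_of_atTop t₁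
    exact (hall n hn).not_ge hle
  refine ⟨t, by omega, hpos, ?_⟩
  rw [(hd t (by omega)).2, Real.sign_of_pos hpos] at hnext
  rw [tmBlock_zero]
  push_cast
  linarith

theorem GreedyFrom.frequently_pos_le_tmBlock (hd : GreedyFrom N d) (K : ℕ)
    (hK : ∀ k < K, ¬ StepsFollowTM (k + 1) d) :
    ∃ᶠ t in atTop, 0 < d t ∧ d t ≤ tmBlock K (t + 1) := by
  induction K with
  | zero => exact hd.frequently_pos_le_tmBlock_zero
  | succ K ih =>
    refine frequently_atTop.2 fun M => ?_
    obtain ⟨t₀, ht₀, hpos, hle⟩ := (ih fun k hk => hK k (by omega)).forall_exists_of_atTop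
      (max M (max N (threshold (K + 1))))
    obtain ⟨t, ht, hgood⟩ :=
      hd.exists_le_tmBlock_succ (by omega) (by omega) hpos hle (hK K K.lt_succ_self)
    exact ⟨t, by omega, hgood⟩

theorem greedyFrom_gSigma_sub {τ : ℝ} (hN : ∀ n, N ≤ n → gSigma τ n ≠ τ) :
    GreedyFrom N (fun n => gSigma τ n - τ) := by
  intro n hn
  refine ⟨sub_ne_zero.2 (hN n hn), ?_⟩
  dsimp only
  rw [gSigma]
  rcases lt_or_gt_of_ne (hN n hn) with h | h
  · rw [if_pos h.le, Real.sign_of_neg (sub_neg.2 h)]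
    ring
  · rw [if_neg (not_le.2 h), Real.sign_of_pos (sub_pos.2 h)]
    ring

theorem mem_Xset_of_stepsFollowTM_sub {τ : ℝ} {k : ℕ}
    (h : StepsFollowTM (k + 1) (fun n => gSigma τ n - τ)) : τ ∈ Xset (k + 1) := by
  obtain ⟨t₀, ht₀⟩ := h
  refine mem_Xset_of_gSign_eq (t₀ := t₀) (2 ^ k) fun n hn => ?_
  rw [gSign_succ, fPer_add_two_pow, ← ht₀ n hn]
  ring

theorem mem_Xset_of_stepsFollowTM_sub_rev {τ : ℝ} {k : ℕ}
    (h : StepsFollowTM (k + 1) (fun n => τ - gSigma τ n)) : τ ∈ Xset (k + 1) := by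
  obtain ⟨t₀, ht₀⟩ := h
  refine mem_Xset_of_gSign_eq (t₀ := t₀) 0 fun n hn => ?_
  rw [add_zero, gSign_succ, ← neg_neg (fPer _ _), ← ht₀ n hn]
  ring

theorem exists_mul_pow_lt_cConst {k : ℕ} {e : ℕ → ℝ}
    (he : ∃ᶠ t in atTop, 0 < e t ∧ e t ≤ tmBlock k (t + 1)) (N : ℕ) :
    ∃ n : ℕ, N ≤ n ∧ 0 < n ∧ 0 < e n * (n : ℝ) ^ (k + 1) ∧ e n * (n : ℝ) ^ (k + 1) < cConst k := by
  obtain ⟨n, hn, hpos, hle⟩ := he.forall_exists_of_atTop (max N 1)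
  have hn0 : (0 : ℝ) < n := by exact_mod_cast (by omega : 0 < n)
  refine ⟨n, by omega, by omega, by positivity, ?_⟩
  have hc := cConst_pos k
  calc e n * (n : ℝ) ^ (k + 1) ≤ cConst k / ((n + 1 : ℕ) : ℝ) ^ (k + 1) * (n : ℝ) ^ (k + 1) := by
        gcongr
        exact hle.trans (tmBlock_le k n.succ_pos)
    _ < cConst k := by
        rw [div_mul_eq_mul_div, div_lt_iff₀ (by positivity)]
        gcongr
        linarith

end ThueMorseGreedy

/-- Corollary 2 of the paper: for `τ ∉ Y_k` there are infinitely many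
`n` with `0 < (σ_n(τ) - τ) n^{k+1} < c_k`, and infinitely many `n` with
`0 < (τ - σ_n(τ)) n^{k+1} < c_k`. -/
theorem stmt_13 (k : ℕ) (τ : ℝ) (hτ : τ ∉ Yset k) :
    (∀ N : ℕ, ∃ n : ℕ, N ≤ n ∧ 0 < n ∧
      0 < (gSigma τ n - τ) * (n : ℝ) ^ (k + 1) ∧
      (gSigma τ n - τ) * (n : ℝ) ^ (k + 1) < cConst k) ∧
    (∀ N : ℕ, ∃ n : ℕ, N ≤ n ∧ 0 < n ∧
      0 < (τ - gSigma τ n) * (n : ℝ) ^ (k + 1) ∧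
      (τ - gSigma τ n) * (n : ℝ) ^ (k + 1) < cConst k) := by
  obtain ⟨N, hN⟩ := exists_forall_gSigma_ne τ
  have hd := ThueMorseGreedy.greedyFrom_gSigma_sub hN
  have hd' : ThueMorseGreedy.GreedyFrom N (fun n => τ - gSigma τ n) := by simpa using hd.neg
  have hX : ∀ h < k, τ ∉ Xset (h + 1) := fun h hh hmem =>
    hτ (Set.mem_biUnion (Finset.mem_Icc.2 ⟨by omega, by omega⟩) hmem)
  exact ⟨ThueMorseGreedy.exists_mul_pow_lt_cConst (hd.frequently_pos_le_tmBlock k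
      fun h hh hs => hX h hh (ThueMorseGreedy.mem_Xset_of_stepsFollowTM_sub hs)),
    ThueMorseGreedy.exists_mul_pow_lt_cConst (hd'.frequently_pos_le_tmBlock k
      fun h hh hs => hX h hh (ThueMorseGreedy.mem_Xset_of_stepsFollowTM_sub_rev hs))⟩
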